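/- Let n ≥ 1 and 0 < α < 1. Let a_1,…,a_N > 0 and let y_1,…,y_N ∈ ℝⁿ be distinct points, and let K : ℝⁿ → ℝ be a concave C² function. Define u(x) := −Σ_{j=1}^N a_j·|x − y_j|^α + K(x). Then for each i ∈ {1,…,N} there exists ε₀ > 0 such that for every 0 < ε < ε₀ and every x with |x − y_i| = ε, one has ⟨∇u(x), (y_i − x)/ε⟩ > 0; that is, near each pole y_i the gradient of u points inward toward the pole on the sphere ∂B(y_i, ε). -/

import Mathlib

open Topology RealInnerProductSpace

/-!
Near `yᵢ` write `u = -aᵢ‖x - yᵢ‖^α + v` with `v` of class `C¹` around `yᵢ`. On the sphere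
`‖x - yᵢ‖ = ε` the singular term contributes exactly `aᵢ α ε^(α-1)` to the inward derivative,
which blows up as `ε → 0⁺` since `α < 1`, while the contribution of `v` stays bounded by a bound
for `‖Dv‖` near `yᵢ`.
-/

section
variable {E : Type*} [NormedAddCommGroup E] [InnerProductSpace ℝ E]

theorem hasFDerivAt_norm_sub_rpow (α : ℝ) {p x : E} (hx : x ≠ p) :
    HasFDerivAt (fun z => ‖z - p‖ ^ α) ((α * ‖x - p‖ ^ (α - 2)) • innerSL ℝ (x - p)) x := by
  have hx' : ‖x - p‖ ^ 2 ≠ 0 := pow_ne_zero 2 (norm_ne_zero_iff.2 (sub_ne_zero.2 hx))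
  have hsq (t b : ℝ) (ht : 0 ≤ t) : (t ^ 2) ^ (b / 2) = t ^ b := by
    rw [← Real.rpow_natCast, ← Real.rpow_mul ht]
    ring_nf
  convert ((hasFDerivAt_id x).sub_const p).norm_sq.rpow_const (p := α / 2) (Or.inl hx') using 1
  · funext z
    simp only [id, hsq _ _ (norm_nonneg _)]
  · ext v
    have hexp : α / 2 - 1 = (α - 2) / 2 := by ring
    simp only [id, hexp, hsq _ _ (norm_nonneg _), smul_apply, smul_eq_mul,
      innerSL_apply_apply, ContinuousLinearMap.comp_apply, ContinuousLinearMap.id_apply,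
      nsmul_eq_mul]
    ring

theorem contDiffAt_norm_sub_rpow {n : WithTop ℕ∞} (α : ℝ) {p x : E} (hx : x ≠ p) :
    ContDiffAt ℝ n (fun z => ‖z - p‖ ^ α) x :=
  ((contDiffAt_id.sub contDiffAt_const).norm ℝ (sub_ne_zero.2 hx)).rpow_const_of_ne
    (norm_ne_zero_iff.2 (sub_ne_zero.2 hx))

theorem eventually_inner_gradient_pos_of_rpow_pole [CompleteSpace E] {c α : ℝ} (hc : 0 < c)
    (hα0 : 0 < α) (hα1 : α < 1) {p : E} {v : E → ℝ} (hv : ContDiffAt ℝ 1 v p) :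
    ∀ᶠ ε in 𝓝[>] 0, ∀ x, ‖x - p‖ = ε →
      0 < ⟪gradient (fun z => -(c * ‖z - p‖ ^ α) + v z) x, ε⁻¹ • (p - x)⟫ := by
  set M := ‖fderiv ℝ v p‖ + 1
  obtain ⟨δ, hδ, hvδ⟩ : ∃ δ > 0, ∀ z, dist z p < δ →
      DifferentiableAt ℝ v z ∧ ‖fderiv ℝ v z‖ < M :=
    Metric.eventually_nhds_iff.1 <| ((hv.eventually (by simp)).and
      ((hv.continuousAt_fderiv one_ne_zero).norm.eventually (gt_mem_nhds (lt_add_one _)))).mono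
      fun z hz => ⟨hz.1.differentiableAt one_ne_zero, hz.2⟩
  have hblowup : ∀ᶠ ε in 𝓝[>] 0, M < c * α * ε ^ (α - 1) :=
    ((tendsto_rpow_neg_nhdsGT_zero (by linarith)).const_mul_atTop
      (by positivity)).eventually_gt_atTop M
  filter_upwards [self_mem_nhdsWithin, nhdsWithin_le_nhds (gt_mem_nhds hδ), hblowup]
    with ε (hε : 0 < ε) hεδ hM x hx
  obtain ⟨hvx, hvxM⟩ := hvδ x (by rwa [dist_eq_norm, hx])
  have hxp : x ≠ p := by
    rintro rfl
    simp only [sub_self, norm_zero] at hx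
    exact hε.ne hx
  have hD := ((hasFDerivAt_norm_sub_rpow α hxp).const_mul c).fun_neg.fun_add hvx.hasFDerivAt
  have hpole : -((c • (α * ‖x - p‖ ^ (α - 2)) • innerSL ℝ (x - p)) (ε⁻¹ • (p - x)))
      = c * α * ε ^ (α - 1) := by
    have hinner : ⟪x - p, p - x⟫ = -ε ^ 2 := by
      rw [← neg_sub x p, inner_neg_right, real_inner_self_eq_norm_sq, hx]
    have hpow : ε ^ (α - 1) = ε ^ (α - 2) * ε := by
      rw [← Real.rpow_add_one hε.ne']
      ring_nf
    simp only [smul_apply, innerSL_apply_apply, inner_smul_right, hinner, hx, smul_eq_mul, hpow]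
    field_simp
  have hrest : -M < fderiv ℝ v x (ε⁻¹ • (p - x)) := by
    have hunit : ‖ε⁻¹ • (p - x)‖ = 1 := by
      rw [norm_smul, norm_sub_rev, hx, Real.norm_eq_abs, abs_inv, abs_of_pos hε,
        inv_mul_cancel₀ hε.ne']
    have := (fderiv ℝ v x).le_opNorm (ε⁻¹ • (p - x))
    rw [hunit, mul_one, Real.norm_eq_abs] at this
    linarith [neg_abs_le (fderiv ℝ v x (ε⁻¹ • (p - x)))]
  rw [inner_gradient_left, hD.fderiv, add_apply, neg_apply, hpole]
  linarith
end

theorem stmt15_general {n : ℕ} (α : ℝ) (hα0 : 0 < α) (hα1 : α < 1)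
    (N : ℕ) (a : Fin N → ℝ) (ha : ∀ j, 0 < a j)
    (y : Fin N → EuclideanSpace ℝ (Fin n)) (hy : Function.Injective y)
    (K : EuclideanSpace ℝ (Fin n) → ℝ)
    (hK2 : ContDiff ℝ 2 K)
    (u : EuclideanSpace ℝ (Fin n) → ℝ)
    (hu : u = fun x => -∑ j, a j * ‖x - y j‖ ^ α + K x) :
    ∀ i : Fin N, ∃ ε₀ : ℝ, 0 < ε₀ ∧ ∀ ε : ℝ, 0 < ε → ε < ε₀ →
      ∀ x : EuclideanSpace ℝ (Fin n), ‖x - y i‖ = ε →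
        0 < ⟪gradient u x, ε⁻¹ • (y i - x)⟫ := by
  intro i
  set v := fun z => -∑ j ∈ Finset.univ.erase i, a j * ‖z - y j‖ ^ α + K z
  have hu_split : u = fun z => -(a i * ‖z - y i‖ ^ α) + v z := by
    rw [hu]
    funext z
    rw [← Finset.add_sum_erase _ _ (Finset.mem_univ i)]
    ring
  have hv : ContDiffAt ℝ 1 v (y i) :=
    (ContDiffAt.sum fun j hj => contDiffAt_const.mul <| contDiffAt_norm_sub_rpow α <|
      hy.ne (Finset.ne_of_mem_erase hj).symm).neg.add (hK2.contDiffAt.of_le (by norm_num))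
  obtain ⟨ε₀, hε₀, hsub⟩ := mem_nhdsGT_iff_exists_Ioo_subset.1 <|
    hu_split ▸ eventually_inner_gradient_pos_of_rpow_pole (ha i) hα0 hα1 hv
  exact ⟨ε₀, hε₀, fun ε hε hεε₀ => hsub ⟨hε, hεε₀⟩⟩

/-- for `0 < α < 1`, distinct poles `y₁,…,y_N`, weights `aⱼ > 0` and a
concave `C²` function `K`, near each pole `yᵢ` the gradient of
`u(x) = −Σⱼ aⱼ|x − yⱼ|^α + K(x)` points inward toward the pole: there is `ε₀ > 0`
such that `⟨∇u(x), (yᵢ − x)/ε⟩ > 0` whenever `0 < ε < ε₀` and `|x − yᵢ| = ε`. -/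
theorem stmt15 {n : ℕ} (hn : 1 ≤ n) (α : ℝ) (hα0 : 0 < α) (hα1 : α < 1)
    (N : ℕ) (a : Fin N → ℝ) (ha : ∀ j, 0 < a j)
    (y : Fin N → EuclideanSpace ℝ (Fin n)) (hy : Function.Injective y)
    (K : EuclideanSpace ℝ (Fin n) → ℝ)
    (hK : ConcaveOn ℝ Set.univ K) (hK2 : ContDiff ℝ 2 K)
    (u : EuclideanSpace ℝ (Fin n) → ℝ)
    (hu : u = fun x => -∑ j, a j * ‖x - y j‖ ^ α + K x) :
    ∀ i : Fin N, ∃ ε₀ : ℝ, 0 < ε₀ ∧ ∀ ε : ℝ, 0 < ε → ε < ε₀ →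
      ∀ x : EuclideanSpace ℝ (Fin n), ‖x - y i‖ = ε →
        0 < ⟪gradient u x, ε⁻¹ • (y i - x)⟫ :=
  stmt15_general α hα0 hα1 N a ha y hy K hK2 u hu
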